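/- arXiv:2104.03155 — 2 statements merged into one kernel-verified Lean document; each statement's English description precedes it below -/
import Mathlib

section
/- For every q ∈ ℝ³ with ‖q‖ < 2π, log(exp(q)) = q, where exp(q) = (cos(‖q‖/2), sin(‖q‖/2)·q/‖q‖) for q ≠ 0 and exp(0) = (1,0,0,0), and log(Q) = 2·arccos(w)·v/‖v‖ for a unit quaternion Q = (w, v) with |w| ≠ 1, log(Q) = 0 otherwise. -/
/-! For `q ≠ 0` put `θ = ‖q‖/2 ∈ (0, π)`. Then `sin θ > 0`, so `|cos θ| ≠ 1`, `arccos (cos θ) = θ`,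
and the vector part of `exp q` has norm `sin θ`; hence `log (exp q) = (2θ/‖q‖) • q = q`. -/

open scoped Classical

/-- The quaternion exponential `exp : ℝ³ → ℝ × ℝ³`, with quaternions written as
pairs `(w, v)` of scalar and vector part:
`exp(q) = (cos(‖q‖/2), sin(‖q‖/2) · q/‖q‖)` for `q ≠ 0`, `exp(0) = (1, 0)`. -/
noncomputable def quatExp (q : EuclideanSpace ℝ (Fin 3)) :
    ℝ × EuclideanSpace ℝ (Fin 3) :=
  if q = 0 then (1, 0)
  else (Real.cos (‖q‖ / 2), (Real.sin (‖q‖ / 2) / ‖q‖) • q)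

/-- The quaternion logarithm of a (unit) quaternion `Q = (w, v)`:
`log(Q) = 2 · arccos(w) · v/‖v‖` if `|w| ≠ 1`, and `log(Q) = 0` otherwise. -/
noncomputable def quatLog (Q : ℝ × EuclideanSpace ℝ (Fin 3)) :
    EuclideanSpace ℝ (Fin 3) :=
  if |Q.1| = 1 then 0
  else (2 * Real.arccos Q.1 / ‖Q.2‖) • Q.2

open Real

lemma abs_cos_ne_one_of_sin_ne_zero {θ : ℝ} (h : sin θ ≠ 0) : |cos θ| ≠ 1 := fun h1 ↦
  h (sin_eq_zero_iff_cos_eq.2 ((abs_eq zero_le_one).1 h1))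

lemma quatExp_of_ne_zero {q : EuclideanSpace ℝ (Fin 3)} (hq : q ≠ 0) :
    quatExp q = (cos (‖q‖ / 2), (sin (‖q‖ / 2) / ‖q‖) • q) :=
  if_neg hq

lemma quatLog_of_abs_ne_one {Q : ℝ × EuclideanSpace ℝ (Fin 3)} (hQ : |Q.1| ≠ 1) :
    quatLog Q = (2 * arccos Q.1 / ‖Q.2‖) • Q.2 :=
  if_neg hQ

lemma quatLog_cos_sin_smul {θ : ℝ} (h0 : 0 < θ) (hπ : θ < π) {u : EuclideanSpace ℝ (Fin 3)}
    (hu : u ≠ 0) : quatLog (cos θ, (sin θ / ‖u‖) • u) = (2 * θ / ‖u‖) • u := by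
  have hsin : 0 < sin θ := sin_pos_of_pos_of_lt_pi h0 hπ
  have hnorm : ‖(sin θ / ‖u‖) • u‖ = sin θ := by
    rw [norm_smul, Real.norm_of_nonneg (by positivity), div_mul_cancel₀ _ (norm_ne_zero_iff.2 hu)]
  rw [quatLog_of_abs_ne_one (abs_cos_ne_one_of_sin_ne_zero hsin.ne'), arccos_cos h0.le hπ.le,
    hnorm, smul_smul]
  congr 1
  field_simp

/-- For every `q ∈ ℝ³` with `‖q‖ < 2π`, `log(exp(q)) = q`. -/
theorem quatLog_quatExp (q : EuclideanSpace ℝ (Fin 3))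
    (hq : ‖q‖ < 2 * Real.pi) :
    quatLog (quatExp q) = q := by
  rcases eq_or_ne q 0 with rfl | hq0
  · simp [quatExp, quatLog]
  · have hθ : 0 < ‖q‖ / 2 := by positivity
    rw [quatExp_of_ne_zero hq0, quatLog_cos_sin_smul hθ (by linarith) hq0,
      mul_div_cancel₀ _ two_ne_zero, div_self (norm_ne_zero_iff.2 hq0), one_smul]
end

section
/- Let k ∈ ℝ³ be a unit vector (‖k‖ = 1) and let θ ∈ (0, π). Define the 3×4 real matrix J_Q = 2 · [ ((θ cos θ − sin θ)/sin² θ) · k ∣ (θ/sin θ) · I₃ ] (first column the given multiple of k, remaining 3×3 block the given multiple of the identity) and the 4×3 real matrix J_q = (1/2) · [ −sin θ · kᵀ ; (sin θ/θ)(I₃ − k kᵀ) + cos θ · k kᵀ ] (first row −sin θ · kᵀ, remaining 3×3 block as given). Then J_Q · J_q = I₃. -/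
open Matrix Real

/-! `J_Q J_q` splits along the projections `I - k kᵀ` and `k kᵀ`, with coefficients
`(θ / sin θ) (sin θ / θ) = 1` and `(θ / sin θ) cos θ - (θ cos θ - sin θ) / sin θ = 1`. -/

theorem mul_eq_smul_one_sub_vecMulVec_add {R : Type*} [CommRing R] (k : Fin 3 → R) (c s a b σ : R) :
    !![c * k 0, s, 0, 0;
       c * k 1, 0, s, 0;
       c * k 2, 0, 0, s] *
    !![-σ * k 0, -σ * k 1, -σ * k 2;
       a * (1 - k 0 * k 0) + b * (k 0 * k 0),
         a * (0 - k 0 * k 1) + b * (k 0 * k 1),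
         a * (0 - k 0 * k 2) + b * (k 0 * k 2);
       a * (0 - k 1 * k 0) + b * (k 1 * k 0),
         a * (1 - k 1 * k 1) + b * (k 1 * k 1),
         a * (0 - k 1 * k 2) + b * (k 1 * k 2);
       a * (0 - k 2 * k 0) + b * (k 2 * k 0),
         a * (0 - k 2 * k 1) + b * (k 2 * k 1),
         a * (1 - k 2 * k 2) + b * (k 2 * k 2)] =
      (s * a) • (1 - vecMulVec k k) + (s * b - c * σ) • vecMulVec k k := by
  ext i j
  fin_cases i <;> fin_cases j <;>
    simp [Matrix.mul_apply, Fin.sum_univ_four, vecMulVec_apply] <;> ring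

theorem JQ_mul_Jq_eq_one_general (k : Fin 3 → ℝ)
    (θ : ℝ) (hθ : θ ∈ Set.Ioo 0 Real.pi)
    (c s a b : ℝ)
    (hc : c = (θ * Real.cos θ - Real.sin θ) / (Real.sin θ) ^ 2)
    (hs : s = θ / Real.sin θ)
    (ha : a = Real.sin θ / θ)
    (hb : b = Real.cos θ)
    (JQ : Matrix (Fin 3) (Fin 4) ℝ)
    (hJQ : JQ = (2 : ℝ) •
      !![c * k 0, s, 0, 0;
         c * k 1, 0, s, 0;
         c * k 2, 0, 0, s])
    (Jq : Matrix (Fin 4) (Fin 3) ℝ)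
    (hJq : Jq = (1 / 2 : ℝ) •
      !![-Real.sin θ * k 0, -Real.sin θ * k 1, -Real.sin θ * k 2;
         a * (1 - k 0 * k 0) + b * (k 0 * k 0),
           a * (0 - k 0 * k 1) + b * (k 0 * k 1),
           a * (0 - k 0 * k 2) + b * (k 0 * k 2);
         a * (0 - k 1 * k 0) + b * (k 1 * k 0),
           a * (1 - k 1 * k 1) + b * (k 1 * k 1),
           a * (0 - k 1 * k 2) + b * (k 1 * k 2);
         a * (0 - k 2 * k 0) + b * (k 2 * k 0),
           a * (0 - k 2 * k 1) + b * (k 2 * k 1),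
           a * (1 - k 2 * k 2) + b * (k 2 * k 2)]) :
    JQ * Jq = (1 : Matrix (Fin 3) (Fin 3) ℝ) := by
  have hθ0 : θ ≠ 0 := hθ.1.ne'
  have hsin : sin θ ≠ 0 := (sin_pos_of_pos_of_lt_pi hθ.1 hθ.2).ne'
  have hsa : s * a = 1 := by rw [hs, ha]; field_simp
  have hsbc : s * b - c * sin θ = 1 := by rw [hs, hb, hc]; field_simp; ring
  rw [hJQ, hJq, Matrix.smul_mul, Matrix.mul_smul, smul_smul, mul_eq_smul_one_sub_vecMulVec_add,
    hsa, hsbc, one_smul, one_smul, sub_add_cancel]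
  norm_num

/-- For a unit vector `k ∈ ℝ³` and `θ ∈ (0, π)`, the Jacobians
`J_Q = 2 [ ((θ cos θ − sin θ)/sin² θ) k ∣ (θ/sin θ) I₃ ]` (3×4) and
`J_q = (1/2) [ −sin θ kᵀ ; (sin θ/θ)(I₃ − k kᵀ) + cos θ k kᵀ ]` (4×3)
satisfy `J_Q · J_q = I₃`. -/
theorem JQ_mul_Jq_eq_one (k : Fin 3 → ℝ)
    (hk : k 0 ^ 2 + k 1 ^ 2 + k 2 ^ 2 = 1)
    (θ : ℝ) (hθ : θ ∈ Set.Ioo 0 Real.pi)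
    (c s a b : ℝ)
    (hc : c = (θ * Real.cos θ - Real.sin θ) / (Real.sin θ) ^ 2)
    (hs : s = θ / Real.sin θ)
    (ha : a = Real.sin θ / θ)
    (hb : b = Real.cos θ)
    (JQ : Matrix (Fin 3) (Fin 4) ℝ)
    (hJQ : JQ = (2 : ℝ) •
      !![c * k 0, s, 0, 0;
         c * k 1, 0, s, 0;
         c * k 2, 0, 0, s])
    (Jq : Matrix (Fin 4) (Fin 3) ℝ)
    (hJq : Jq = (1 / 2 : ℝ) •
      !![-Real.sin θ * k 0, -Real.sin θ * k 1, -Real.sin θ * k 2;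
         a * (1 - k 0 * k 0) + b * (k 0 * k 0),
           a * (0 - k 0 * k 1) + b * (k 0 * k 1),
           a * (0 - k 0 * k 2) + b * (k 0 * k 2);
         a * (0 - k 1 * k 0) + b * (k 1 * k 0),
           a * (1 - k 1 * k 1) + b * (k 1 * k 1),
           a * (0 - k 1 * k 2) + b * (k 1 * k 2);
         a * (0 - k 2 * k 0) + b * (k 2 * k 0),
           a * (0 - k 2 * k 1) + b * (k 2 * k 1),
           a * (1 - k 2 * k 2) + b * (k 2 * k 2)]) :
    JQ * Jq = (1 : Matrix (Fin 3) (Fin 3) ℝ) :=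
  JQ_mul_Jq_eq_one_general k θ hθ c s a b hc hs ha hb JQ hJQ Jq hJq
end
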